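/- In the FedAvg setup, fix a round t, a client k, and a neuron h, and write ΔW^h_{t,k} = W^h_{t,k,n} − W^h_{t−1} and Δb^h_{t,k} = b^h_{t,k,n} − b^h_{t−1} for the client-level round update of neuron h. Then there exist real coefficients λ_{i,x}, one for each local update i ∈ {0,…,n−1} and each sample x ∈ A^h(θ_{t,k,i}, B_{t,k,i}), with each λ_{i,x} ≠ 0 — explicitly λ_{i,x} = −η · ∂_h F_{φ_{t,k,i}, y}(ReLU(W_{t,k,i} x + b_{t,k,i})), where y is the label paired with x in B_{t,k,i} — such that ΔW^h_{t,k} = Σ_{i} Σ_{x ∈ A^h(θ_{t,k,i},B_{t,k,i})} λ_{i,x} · x and Δb^h_{t,k} = Σ_{i} Σ_{x ∈ A^h(θ_{t,k,i},B_{t,k,i})} λ_{i,x}. In particular, the client's per-neuron update is a linear combination of samples in the client-level activation set A^h_{t,k} = ∪_{i=0}^{n−1} A^h(θ_{t,k,i}, B_{t,k,i}). -/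

import Mathlib

/-!
Where no pre-activation vanishes, the ReLU layer agrees near `θ` with the layer whose activation
pattern is frozen at `θ`, and that layer is linear in `(W, b)`. So the derivative of the batch loss
in the direction of `W^h` (resp. `b^h`) only sees the samples activating `h` with
`∂_h F ≠ 0`, each contributing `∂_h F · x` (resp. `∂_h F`). One SGD step therefore moves
`(W^h, b^h)` by `∑ λ_{i,x} (x, 1)` over `A^h(θ_i, B_i)`, and the round update is the
telescoping sum of the `n` local steps.
-/

noncomputable section

/-- Pre-activation `W^h · x + b^h` of neuron `h` on sample `x`. -/
def preact {d H : ℕ} (W : Fin H → Fin d → ℝ) (b : Fin H → ℝ) (x : Fin d → ℝ)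
    (h : Fin H) : ℝ :=
  (∑ j, W h j * x j) + b h

/-- Componentwise ReLU output of the first layer. -/
def reluVec {d H : ℕ} (W : Fin H → Fin d → ℝ) (b : Fin H → ℝ) (x : Fin d → ℝ) :
    Fin H → ℝ :=
  fun h => max (preact W b x h) 0

/-- `F_{φ,y}(z) = ℓ(f(φ, z), y)`. -/
def Floss {H r C : ℕ} {Y : Type*} (f : (Fin r → ℝ) → (Fin H → ℝ) → Fin C → ℝ)
    (l : (Fin C → ℝ) → Y → ℝ) (φ : Fin r → ℝ) (y : Y) (z : Fin H → ℝ) : ℝ :=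
  l (f φ z) y

/-- Partial derivative of `F : ℝ^H → ℝ` in the `h`-th coordinate at `z`. -/
def dFh {H : ℕ} (F : (Fin H → ℝ) → ℝ) (z : Fin H → ℝ) (h : Fin H) : ℝ :=
  fderiv ℝ F z (Pi.single h 1)

/-- The loss of the model `θ = (W, b, φ)` on the batch `B`:
`L(θ; B) = ∑_{(x,y) ∈ B} ℓ(f(φ, ReLU(W x + b)), y)`. -/
def batchLoss {d H r C : ℕ} {Y : Type*} (f : (Fin r → ℝ) → (Fin H → ℝ) → Fin C → ℝ)
    (l : (Fin C → ℝ) → Y → ℝ)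
    (θ : (Fin H → Fin d → ℝ) × (Fin H → ℝ) × (Fin r → ℝ))
    (B : Finset ((Fin d → ℝ) × Y)) : ℝ :=
  ∑ p ∈ B, Floss f l θ.2.2 p.2 (reluVec θ.1 θ.2.1 p.1)

open Classical in
/-- Batch-level activation set `A^h(θ, B)` of neuron `h`, as a finset of
sample/label pairs of the batch. -/
def activB {d H r C : ℕ} {Y : Type*} (f : (Fin r → ℝ) → (Fin H → ℝ) → Fin C → ℝ)
    (l : (Fin C → ℝ) → Y → ℝ)
    (θ : (Fin H → Fin d → ℝ) × (Fin H → ℝ) × (Fin r → ℝ))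
    (B : Finset ((Fin d → ℝ) × Y)) (h : Fin H) : Finset ((Fin d → ℝ) × Y) :=
  B.filter (fun p => 0 < preact θ.1 θ.2.1 p.1 h ∧
    dFh (Floss f l θ.2.2 p.2) (reluVec θ.1 θ.2.1 p.1) h ≠ 0)

/-- The gradient of a function on the parameter space, assembled coordinatewise
from directional derivatives. -/
def gradP {d H r : ℕ} (L : ((Fin H → Fin d → ℝ) × (Fin H → ℝ) × (Fin r → ℝ)) → ℝ)
    (θ : (Fin H → Fin d → ℝ) × (Fin H → ℝ) × (Fin r → ℝ)) :
    (Fin H → Fin d → ℝ) × (Fin H → ℝ) × (Fin r → ℝ) :=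
  (fun h j => fderiv ℝ L θ (Pi.single h (Pi.single j 1), 0, 0),
   fun h => fderiv ℝ L θ (0, Pi.single h 1, 0),
   fun s => fderiv ℝ L θ (0, 0, Pi.single s 1))

/-- Round-level activation set `A^h_t` of neuron `h`: the set of samples activating
neuron `h` at some local update of some client during the round. -/
def roundActiv {d H r C K : ℕ} {Y : Type*} (f : (Fin r → ℝ) → (Fin H → ℝ) → Fin C → ℝ)
    (l : (Fin C → ℝ) → Y → ℝ) (n : ℕ)
    (θ : Fin K → ℕ → ((Fin H → Fin d → ℝ) × (Fin H → ℝ) × (Fin r → ℝ)))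
    (Bt : Fin K → ℕ → Finset ((Fin d → ℝ) × Y)) (h : Fin H) : Set (Fin d → ℝ) :=
  {x | ∃ k, ∃ i < n, ∃ y, (x, y) ∈ activB f l (θ k i) (Bt k i) h}

/-- The explicit coefficient `λ_{i,x} = -η ∂_h F_{φ_{t,k,i},y}(ReLU(W_{t,k,i} x + b_{t,k,i}))`
attached to the occurrence of the sample/label pair `p` at local update `i` of the client. -/
def lamI {d H r C : ℕ} {Y : Type*} (f : (Fin r → ℝ) → (Fin H → ℝ) → Fin C → ℝ)
    (l : (Fin C → ℝ) → Y → ℝ) (η : ℝ)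
    (θ : (Fin H → Fin d → ℝ) × (Fin H → ℝ) × (Fin r → ℝ))
    (h : Fin H) (p : (Fin d → ℝ) × Y) : ℝ :=
  -η * dFh (Floss f l θ.2.2 p.2) (reluVec θ.1 θ.2.1 p.1) h

open Filter Topology

abbrev Params (d H r : ℕ) := (Fin H → Fin d → ℝ) × (Fin H → ℝ) × (Fin r → ℝ)

lemma max_zero_eventuallyEq {E : Type*} [TopologicalSpace E] {g : E → ℝ} {a : E}
    (hg : ContinuousAt g a) (ha : g a ≠ 0) :
    (fun y => max (g y) 0) =ᶠ[𝓝 a] fun y => if 0 < g a then g y else 0 := by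
  rcases ha.lt_or_gt with hneg | hpos
  · filter_upwards [hg.eventually (gt_mem_nhds hneg)] with y hy
    simp [hy.le, not_lt.2 hneg.le]
  · filter_upwards [hg.eventually (lt_mem_nhds hpos)] with y hy
    simp [hy.le, hpos]

section Layer

variable {d H r : ℕ}

lemma preact_add_smul (W V : Fin H → Fin d → ℝ) (b β : Fin H → ℝ) (t : ℝ) (x : Fin d → ℝ)
    (h : Fin H) : preact (W + t • V) (b + t • β) x h = preact W b x h + t * preact V β x h := by
  simp only [preact, Pi.add_apply, Pi.smul_apply, smul_eq_mul, add_mul, mul_add,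
    Finset.sum_add_distrib, Finset.mul_sum, mul_assoc]
  ring

lemma preact_single (w : Fin d → ℝ) (c : ℝ) (x : Fin d → ℝ) (h h' : Fin H) :
    preact (Pi.single h w) (Pi.single h c) x h'
      = (Pi.single h (∑ j, w j * x j + c) : Fin H → ℝ) h' := by
  rcases eq_or_ne h' h with rfl | hne
  · simp [preact]
  · simp [preact, hne]

lemma differentiable_preact (x : Fin d → ℝ) (h : Fin H) :
    Differentiable ℝ fun ψ : Params d H r => preact ψ.1 ψ.2.1 x h := by
  unfold preact
  fun_prop

def reluFrozenAt (θ : Params d H r) (x : Fin d → ℝ) (W : Fin H → Fin d → ℝ) (b : Fin H → ℝ) :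
    Fin H → ℝ :=
  fun h => if 0 < preact θ.1 θ.2.1 x h then preact W b x h else 0

lemma reluVec_eventuallyEq_reluFrozenAt {θ : Params d H r} {x : Fin d → ℝ}
    (hx : ∀ h, preact θ.1 θ.2.1 x h ≠ 0) :
    (fun ψ : Params d H r => reluVec ψ.1 ψ.2.1 x)
      =ᶠ[𝓝 θ] fun ψ => reluFrozenAt θ x ψ.1 ψ.2.1 := by
  have hall := eventually_all.2 fun h =>
    max_zero_eventuallyEq ((differentiable_preact (r := r) x h).continuous.continuousAt) (hx h)
  filter_upwards [hall] with ψ hψ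
  exact funext hψ

lemma reluFrozenAt_self (θ : Params d H r) (x : Fin d → ℝ) :
    reluFrozenAt θ x θ.1 θ.2.1 = reluVec θ.1 θ.2.1 x := by
  funext h
  by_cases hpos : 0 < preact θ.1 θ.2.1 x h
  · simp [reluFrozenAt, reluVec, hpos, hpos.le]
  · simp [reluFrozenAt, reluVec, hpos, not_lt.1 hpos]

lemma reluFrozenAt_add_smul (θ : Params d H r) (x : Fin d → ℝ) (W V : Fin H → Fin d → ℝ)
    (b β : Fin H → ℝ) (t : ℝ) :
    reluFrozenAt θ x (W + t • V) (b + t • β)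
      = reluFrozenAt θ x W b + t • reluFrozenAt θ x V β := by
  funext h
  by_cases hpos : 0 < preact θ.1 θ.2.1 x h
  · simp [reluFrozenAt, hpos, preact_add_smul]
  · simp [reluFrozenAt, hpos]

lemma differentiable_reluFrozenAt (θ : Params d H r) (x : Fin d → ℝ) :
    Differentiable ℝ fun ψ : Params d H r => reluFrozenAt θ x ψ.1 ψ.2.1 :=
  differentiable_pi.2 fun h => by
    unfold reluFrozenAt
    split_ifs
    · exact differentiable_preact x h
    · exact differentiable_const 0

lemma reluFrozenAt_single (θ : Params d H r) (x w : Fin d → ℝ) (c : ℝ) (h : Fin H) :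
    reluFrozenAt θ x (Pi.single h w) (Pi.single h c)
      = Pi.single h (if 0 < preact θ.1 θ.2.1 x h then ∑ j, w j * x j + c else 0) := by
  funext h'
  rcases eq_or_ne h' h with rfl | hne
  · simp [reluFrozenAt, preact_single]
  · simp [reluFrozenAt, preact_single, hne]

end Layer

section Loss

variable {d H r C : ℕ} {Y : Type*}
  (f : (Fin r → ℝ) → (Fin H → ℝ) → Fin C → ℝ) (l : (Fin C → ℝ) → Y → ℝ)

lemma differentiable_Floss_uncurry
    (hf : Differentiable ℝ (fun q : (Fin r → ℝ) × (Fin H → ℝ) => f q.1 q.2))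
    (hl : ∀ y, Differentiable ℝ (fun u => l u y)) (y : Y) :
    Differentiable ℝ fun q : (Fin r → ℝ) × (Fin H → ℝ) => Floss f l q.1 y q.2 :=
  (hl y).comp hf

lemma differentiable_Floss
    (hf : Differentiable ℝ (fun q : (Fin r → ℝ) × (Fin H → ℝ) => f q.1 q.2))
    (hl : ∀ y, Differentiable ℝ (fun u => l u y)) (φ : Fin r → ℝ) (y : Y) :
    Differentiable ℝ (Floss f l φ y) :=
  (differentiable_Floss_uncurry f l hf hl y).comp
    ((differentiable_const φ).prodMk differentiable_id)

lemma sampleLoss_eventuallyEq {θ : Params d H r} {x : Fin d → ℝ}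
    (hx : ∀ h, preact θ.1 θ.2.1 x h ≠ 0) (y : Y) :
    (fun ψ : Params d H r => Floss f l ψ.2.2 y (reluVec ψ.1 ψ.2.1 x))
      =ᶠ[𝓝 θ] fun ψ => Floss f l ψ.2.2 y (reluFrozenAt θ x ψ.1 ψ.2.1) := by
  filter_upwards [reluVec_eventuallyEq_reluFrozenAt hx] with ψ hψ
  rw [hψ]

lemma differentiableAt_sampleLoss
    (hf : Differentiable ℝ (fun q : (Fin r → ℝ) × (Fin H → ℝ) => f q.1 q.2))
    (hl : ∀ y, Differentiable ℝ (fun u => l u y)) {θ : Params d H r} {x : Fin d → ℝ}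
    (hx : ∀ h, preact θ.1 θ.2.1 x h ≠ 0) (y : Y) :
    DifferentiableAt ℝ (fun ψ : Params d H r => Floss f l ψ.2.2 y (reluVec ψ.1 ψ.2.1 x)) θ := by
  refine DifferentiableAt.congr_of_eventuallyEq ?_ (sampleLoss_eventuallyEq f l hx y)
  exact (differentiable_Floss_uncurry f l hf hl y).comp
    ((differentiable_snd.comp differentiable_snd).prodMk (differentiable_reluFrozenAt θ x)) θ

lemma hasLineDerivAt_sampleLoss
    (hf : Differentiable ℝ (fun q : (Fin r → ℝ) × (Fin H → ℝ) => f q.1 q.2))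
    (hl : ∀ y, Differentiable ℝ (fun u => l u y)) {θ : Params d H r} {x : Fin d → ℝ}
    (hx : ∀ h, preact θ.1 θ.2.1 x h ≠ 0) (y : Y) (V : Fin H → Fin d → ℝ) (β : Fin H → ℝ) :
    HasLineDerivAt ℝ (fun ψ : Params d H r => Floss f l ψ.2.2 y (reluVec ψ.1 ψ.2.1 x))
      (fderiv ℝ (Floss f l θ.2.2 y) (reluVec θ.1 θ.2.1 x) (reluFrozenAt θ x V β))
      θ (V, β, 0) := by
  refine HasLineDerivAt.congr_of_eventuallyEq ?_ (sampleLoss_eventuallyEq f l hx y)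
  have hline : (fun t : ℝ => Floss f l (θ + t • (V, β, 0)).2.2 y
        (reluFrozenAt θ x (θ + t • (V, β, 0)).1 (θ + t • (V, β, 0)).2.1))
      = fun t => Floss f l θ.2.2 y (reluVec θ.1 θ.2.1 x + t • reluFrozenAt θ x V β) := by
    funext t
    simp [reluFrozenAt_add_smul, reluFrozenAt_self]
  rw [HasLineDerivAt, hline]
  exact (differentiable_Floss f l hf hl θ.2.2 y _).hasFDerivAt.hasLineDerivAt _

lemma fderiv_sampleLoss_single
    (hf : Differentiable ℝ (fun q : (Fin r → ℝ) × (Fin H → ℝ) => f q.1 q.2))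
    (hl : ∀ y, Differentiable ℝ (fun u => l u y)) {θ : Params d H r} {x : Fin d → ℝ}
    (hx : ∀ h, preact θ.1 θ.2.1 x h ≠ 0) (y : Y) (h : Fin H) (w : Fin d → ℝ) (c : ℝ) :
    fderiv ℝ (fun ψ : Params d H r => Floss f l ψ.2.2 y (reluVec ψ.1 ψ.2.1 x)) θ
        (Pi.single h w, Pi.single h c, 0)
      = (if 0 < preact θ.1 θ.2.1 x h then ∑ j, w j * x j + c else 0)
          * dFh (Floss f l θ.2.2 y) (reluVec θ.1 θ.2.1 x) h := by
  rw [← (differentiableAt_sampleLoss f l hf hl hx y).lineDeriv_eq_fderiv,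
    (hasLineDerivAt_sampleLoss f l hf hl hx y _ _).lineDeriv, reluFrozenAt_single,
    ← smul_eq_mul, dFh, ← map_smul, ← Pi.single_smul', smul_eq_mul, mul_one]

end Loss

section Batch

variable {d H r C : ℕ} {Y : Type*}
  (f : (Fin r → ℝ) → (Fin H → ℝ) → Fin C → ℝ) (l : (Fin C → ℝ) → Y → ℝ)

lemma fderiv_batchLoss_single
    (hf : Differentiable ℝ (fun q : (Fin r → ℝ) × (Fin H → ℝ) => f q.1 q.2))
    (hl : ∀ y, Differentiable ℝ (fun u => l u y)) {θ : Params d H r}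
    {B : Finset ((Fin d → ℝ) × Y)} (hnd : ∀ h', ∀ p ∈ B, preact θ.1 θ.2.1 p.1 h' ≠ 0)
    (h : Fin H) (w : Fin d → ℝ) (c : ℝ) :
    fderiv ℝ (fun ψ => batchLoss f l ψ B) θ (Pi.single h w, Pi.single h c, 0)
      = ∑ p ∈ activB f l θ B h,
          (∑ j, w j * p.1 j + c) * dFh (Floss f l θ.2.2 p.2) (reluVec θ.1 θ.2.1 p.1) h := by
  unfold batchLoss
  rw [fderiv_fun_sum fun p hp =>
      differentiableAt_sampleLoss f l hf hl (fun h' => hnd h' p hp) p.2,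
    _root_.sum_apply, activB, Finset.sum_filter]
  refine Finset.sum_congr rfl fun p hp => ?_
  rw [fderiv_sampleLoss_single f l hf hl (fun h' => hnd h' p hp)]
  by_cases hpos : 0 < preact θ.1 θ.2.1 p.1 h
  · by_cases hzero : dFh (Floss f l θ.2.2 p.2) (reluVec θ.1 θ.2.1 p.1) h = 0
    all_goals simp [hpos, hzero]
  · simp [hpos]

lemma gradP_batchLoss_fst
    (hf : Differentiable ℝ (fun q : (Fin r → ℝ) × (Fin H → ℝ) => f q.1 q.2))
    (hl : ∀ y, Differentiable ℝ (fun u => l u y)) {θ : Params d H r}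
    {B : Finset ((Fin d → ℝ) × Y)} (hnd : ∀ h', ∀ p ∈ B, preact θ.1 θ.2.1 p.1 h' ≠ 0)
    (h : Fin H) :
    (gradP (fun ψ => batchLoss f l ψ B) θ).1 h
      = ∑ p ∈ activB f l θ B h, dFh (Floss f l θ.2.2 p.2) (reluVec θ.1 θ.2.1 p.1) h • p.1 := by
  funext j
  have := fderiv_batchLoss_single f l hf hl hnd h (Pi.single j 1) 0
  simp only [Pi.single_zero, Pi.single_apply, ite_mul, one_mul, zero_mul, Finset.sum_ite_eq',
    Finset.mem_univ, if_true, add_zero] at this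
  simp [gradP, this, Finset.sum_apply, mul_comm]

lemma gradP_batchLoss_snd_fst
    (hf : Differentiable ℝ (fun q : (Fin r → ℝ) × (Fin H → ℝ) => f q.1 q.2))
    (hl : ∀ y, Differentiable ℝ (fun u => l u y)) {θ : Params d H r}
    {B : Finset ((Fin d → ℝ) × Y)} (hnd : ∀ h', ∀ p ∈ B, preact θ.1 θ.2.1 p.1 h' ≠ 0)
    (h : Fin H) :
    (gradP (fun ψ => batchLoss f l ψ B) θ).2.1 h
      = ∑ p ∈ activB f l θ B h, dFh (Floss f l θ.2.2 p.2) (reluVec θ.1 θ.2.1 p.1) h := by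
  have := fderiv_batchLoss_single f l hf hl hnd h 0 1
  simp only [Pi.single_zero] at this
  simp [gradP, this]

lemma lamI_ne_zero {η : ℝ} (hη : η ≠ 0) {θ : Params d H r} {B : Finset ((Fin d → ℝ) × Y)}
    {h : Fin H} {p : (Fin d → ℝ) × Y} (hp : p ∈ activB f l θ B h) : lamI f l η θ h p ≠ 0 :=
  mul_ne_zero (neg_ne_zero.2 hη) (Finset.mem_filter.1 hp).2.2

lemma sgdStep_neuron
    (hf : Differentiable ℝ (fun q : (Fin r → ℝ) × (Fin H → ℝ) => f q.1 q.2))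
    (hl : ∀ y, Differentiable ℝ (fun u => l u y)) {η : ℝ} {θ θ' : Params d H r}
    {B : Finset ((Fin d → ℝ) × Y)} (hstep : θ' = θ - η • gradP (fun ψ => batchLoss f l ψ B) θ)
    (hnd : ∀ h', ∀ p ∈ B, preact θ.1 θ.2.1 p.1 h' ≠ 0) (h : Fin H) :
    θ'.1 h - θ.1 h = ∑ p ∈ activB f l θ B h, lamI f l η θ h p • p.1 ∧
      θ'.2.1 h - θ.2.1 h = ∑ p ∈ activB f l θ B h, lamI f l η θ h p := by
  subst hstep
  simp only [Prod.fst_sub, Prod.snd_sub, Prod.smul_fst, Prod.smul_snd, Pi.sub_apply,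
    Pi.smul_apply, sub_sub_cancel_left, gradP_batchLoss_fst f l hf hl hnd,
    gradP_batchLoss_snd_fst f l hf hl hnd, lamI, Finset.smul_sum, Finset.mul_sum,
    ← Finset.sum_neg_distrib, mul_smul, neg_mul, neg_smul, smul_eq_mul, and_self]

end Batch

theorem stmt11_general {d H r C : ℕ} {Y : Type*}
    (f : (Fin r → ℝ) → (Fin H → ℝ) → Fin C → ℝ)
    (l : (Fin C → ℝ) → Y → ℝ)
    (hf : Differentiable ℝ (fun q : (Fin r → ℝ) × (Fin H → ℝ) => f q.1 q.2))
    (hl : ∀ y, Differentiable ℝ (fun u => l u y))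
    (n : ℕ) (η : ℝ) (hη : 0 < η)
    (θprev : (Fin H → Fin d → ℝ) × (Fin H → ℝ) × (Fin r → ℝ))
    (Bt : ℕ → Finset ((Fin d → ℝ) × Y))
    (θ : ℕ → ((Fin H → Fin d → ℝ) × (Fin H → ℝ) × (Fin r → ℝ)))
    (hinit : θ 0 = θprev)
    (hstep : ∀ i < n,
      θ (i + 1) = θ i - η • gradP (fun ψ => batchLoss f l ψ (Bt i)) (θ i))
    (hnd : ∀ i < n, ∀ h' : Fin H, ∀ p ∈ Bt i, preact (θ i).1 (θ i).2.1 p.1 h' ≠ 0)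
    (h : Fin H) :
    (∀ i < n, ∀ p ∈ activB f l (θ i) (Bt i) h, lamI f l η (θ i) h p ≠ 0) ∧
    (θ n).1 h - θprev.1 h
      = ∑ i ∈ Finset.range n, ∑ p ∈ activB f l (θ i) (Bt i) h, lamI f l η (θ i) h p • p.1 ∧
    (θ n).2.1 h - θprev.2.1 h
      = ∑ i ∈ Finset.range n, ∑ p ∈ activB f l (θ i) (Bt i) h, lamI f l η (θ i) h p := by
  have hlocal := fun i (hi : i ∈ Finset.range n) =>
    sgdStep_neuron f l hf hl (hstep i (Finset.mem_range.1 hi)) (hnd i (Finset.mem_range.1 hi)) h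
  refine ⟨fun i _ p hp => lamI_ne_zero f l hη.ne' hp, ?_, ?_⟩
  · rw [← hinit, ← Finset.sum_range_sub (fun i => (θ i).1 h)]
    exact Finset.sum_congr rfl fun i hi => (hlocal i hi).1
  · rw [← hinit, ← Finset.sum_range_sub (fun i => (θ i).2.1 h)]
    exact Finset.sum_congr rfl fun i hi => (hlocal i hi).2

theorem stmt11 {d H r C : ℕ} {Y : Type*}
    (f : (Fin r → ℝ) → (Fin H → ℝ) → Fin C → ℝ)
    (l : (Fin C → ℝ) → Y → ℝ)
    (hf : Differentiable ℝ (fun q : (Fin r → ℝ) × (Fin H → ℝ) => f q.1 q.2))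
    (hl : ∀ y, Differentiable ℝ (fun u => l u y))
    (n : ℕ) (η : ℝ) (hη : 0 < η)
    (θprev : (Fin H → Fin d → ℝ) × (Fin H → ℝ) × (Fin r → ℝ))
    (Bt : ℕ → Finset ((Fin d → ℝ) × Y))
    (θ : ℕ → ((Fin H → Fin d → ℝ) × (Fin H → ℝ) × (Fin r → ℝ)))
    (hinj : ∀ i < n, ∀ p ∈ Bt i, ∀ q ∈ Bt i, p.1 = q.1 → p = q)
    (hinit : θ 0 = θprev)
    (hstep : ∀ i < n,
      θ (i + 1) = θ i - η • gradP (fun ψ => batchLoss f l ψ (Bt i)) (θ i))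
    (hnd : ∀ i < n, ∀ h' : Fin H, ∀ p ∈ Bt i, preact (θ i).1 (θ i).2.1 p.1 h' ≠ 0)
    (h : Fin H) :
    (∀ i < n, ∀ p ∈ activB f l (θ i) (Bt i) h, lamI f l η (θ i) h p ≠ 0) ∧
    (θ n).1 h - θprev.1 h
      = ∑ i ∈ Finset.range n, ∑ p ∈ activB f l (θ i) (Bt i) h, lamI f l η (θ i) h p • p.1 ∧
    (θ n).2.1 h - θprev.2.1 h
      = ∑ i ∈ Finset.range n, ∑ p ∈ activB f l (θ i) (Bt i) h, lamI f l η (θ i) h p :=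
  stmt11_general f l hf hl n η hη θprev Bt θ hinit hstep hnd h
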